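/- Let A ∈ ℝ^{n×n}, B ∈ ℝ^{n×1}, C ∈ ℝ^{p×n}, and assume the sign condition Bᵀ e^{Aᵀt} Cᵀ C e^{As} B ≥ 0 for all t, s ≥ 0. Then for every T > 0 and every measurable u : [0,T] → ℝ with |u(s)| ≤ 1 a.e., |∫₀^T C e^{A(T−s)} B u(s) ds| ≤ |∫₀^T C e^{As} B ds|; i.e. the constant input u ≡ 1 maximizes |Cx(T)| over all inputs bounded by 1. -/

import Mathlib

/-! With `a = ∫ u f` and `b = ∫ f`, where `f s = C e^{A(T-s)} B`, the sign condition says that the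
kernel `⟪f s, f t⟫` is nonnegative. Hence `⟪a, f s⟫ = ∫ u(t) ⟪f s, f t⟫ dt` is bounded in absolute
value by `∫ ⟪f s, f t⟫ dt = ⟪b, f s⟫`, and integrating once more against `u` gives
`‖a‖² = ∫ u(s) ⟪a, f s⟫ ds ≤ ∫ ⟪b, f s⟫ ds = ‖b‖²`. The substitution `s ↦ T - s` turns `b` into
`∫₀^T C e^{As} B ds`. -/

open Filter MeasureTheory NormedSpace

noncomputable section

/-- Euclidean norm of a vector in `ℝ^k`. -/
def eNorm {k : ℕ} (v : Fin k → ℝ) : ℝ := Real.sqrt (∑ i, v i ^ 2)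

/-- Matrix norm induced by the Euclidean norms. -/
def matNorm {k l : ℕ} (M : Matrix (Fin k) (Fin l) ℝ) : ℝ :=
  sSup {r | ∃ x : Fin l → ℝ, eNorm x = 1 ∧ r = eNorm (M.mulVec x)}

/-- `A` is Hurwitz: every (complex) eigenvalue of `A` has negative real part. -/
def Hurwitz {n : ℕ} (A : Matrix (Fin n) (Fin n) ℝ) : Prop :=
  ∀ μ ∈ spectrum ℂ (A.map (Complex.ofReal)), μ.re < 0

/-- The matrix exponential `e^{tA}`. -/
def mexp {n : ℕ} (A : Matrix (Fin n) (Fin n) ℝ) (t : ℝ) : Matrix (Fin n) (Fin n) ℝ :=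
  exp (t • A)

open scoped RealInnerProductSpace

section KernelBound

variable {α E : Type*} [MeasurableSpace α] {μ : Measure α}
  [NormedAddCommGroup E] [InnerProductSpace ℝ E] [CompleteSpace E]

lemma abs_integral_mul_le_of_abs_le {u g h : α → ℝ} (hu : ∀ᵐ x ∂μ, |u x| ≤ 1)
    (hh : Integrable h μ) (hgh : ∀ᵐ x ∂μ, |g x| ≤ h x) :
    |∫ x, u x * g x ∂μ| ≤ ∫ x, h x ∂μ := by
  rw [← Real.norm_eq_abs]
  refine norm_integral_le_of_norm_le hh ?_
  filter_upwards [hu, hgh] with x hux hgx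
  rw [Real.norm_eq_abs, abs_mul]
  exact (mul_le_of_le_one_left (abs_nonneg _) hux).trans hgx

lemma inner_integral_smul {u : α → ℝ} {f : α → E} (huf : Integrable (fun x => u x • f x) μ)
    (c : E) : ⟪c, ∫ x, u x • f x ∂μ⟫ = ∫ x, u x * ⟪c, f x⟫ ∂μ := by
  simp only [← integral_inner huf, inner_smul_right]

theorem norm_integral_smul_le_of_inner_nonneg {u : α → ℝ} {f : α → E} (hf : Integrable f μ)
    (hu_meas : AEStronglyMeasurable u μ) (hu : ∀ᵐ x ∂μ, |u x| ≤ 1)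
    (hK : ∀ᵐ s ∂μ, ∀ᵐ t ∂μ, 0 ≤ ⟪f s, f t⟫) :
    ‖∫ x, u x • f x ∂μ‖ ≤ ‖∫ x, f x ∂μ‖ := by
  have huf : Integrable (fun x => u x • f x) μ := hf.bdd_smul 1 hu_meas (by simpa using hu)
  set a := ∫ x, u x • f x ∂μ
  set b := ∫ x, f x ∂μ
  have hpair : ∀ᵐ s ∂μ, |⟪a, f s⟫| ≤ ⟪b, f s⟫ := by
    filter_upwards [hK] with s hKs
    rw [real_inner_comm, inner_integral_smul huf, real_inner_comm, ← integral_inner hf]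
    refine abs_integral_mul_le_of_abs_le hu (hf.const_inner _) ?_
    filter_upwards [hKs] with t ht
    exact (abs_of_nonneg ht).le
  have hsq : ‖a‖ ^ 2 ≤ ‖b‖ ^ 2 := by
    rw [← real_inner_self_eq_norm_sq, ← real_inner_self_eq_norm_sq]
    calc ⟪a, a⟫ ≤ |⟪a, a⟫| := le_abs_self _
      _ = |∫ x, u x * ⟪a, f x⟫ ∂μ| := by rw [inner_integral_smul huf]
      _ ≤ ∫ x, ⟪b, f x⟫ ∂μ := abs_integral_mul_le_of_abs_le hu (hf.const_inner _) hpair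
      _ = ⟪b, b⟫ := integral_inner hf b
  exact (pow_le_pow_iff_left₀ (norm_nonneg _) (norm_nonneg _) two_ne_zero).mp hsq

end KernelBound

section
attribute [local instance] Matrix.linftyOpNormedRing Matrix.linftyOpNormedAlgebra

lemma continuous_mexp {n : ℕ} (A : Matrix (Fin n) (Fin n) ℝ) : Continuous (mexp A) :=
  exp_continuous.comp (continuous_id.smul continuous_const)

end

lemma eNorm_eq_norm_toLp {k : ℕ} (v : Fin k → ℝ) : eNorm v = ‖WithLp.toLp 2 v‖ := by
  simp [eNorm, EuclideanSpace.norm_eq]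

lemma integral_toLp {α ι : Type*} [Fintype ι] [MeasurableSpace α] {μ : Measure α}
    (g : α → ι → ℝ) : ∫ x, WithLp.toLp 2 (g x) ∂μ = WithLp.toLp 2 (∫ x, g x ∂μ) :=
  (EuclideanSpace.equiv ι ℝ).symm.integral_comp_comm g

/-- Section 5.2, formula (5.9): under the sign condition
`Bᵀe^{Aᵀt}CᵀCe^{As}B ≥ 0` for all `t,s ≥ 0`, the constant input `u ≡ 1` maximizes
`|Cx(T)|` over all inputs bounded by `1`. -/
theorem statement_12 {n p : ℕ}
    (A : Matrix (Fin n) (Fin n) ℝ) (B : Fin n → ℝ) (C : Matrix (Fin p) (Fin n) ℝ)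
    (hsign : ∀ t ≥ (0 : ℝ), ∀ s ≥ (0 : ℝ),
      0 ≤ dotProduct (C.mulVec ((mexp A t).mulVec B))
            (C.mulVec ((mexp A s).mulVec B)))
    (T : ℝ) (hT : 0 < T)
    (u : ℝ → ℝ) (hu_meas : Measurable u)
    (hu_bdd : ∀ᵐ s ∂(volume.restrict (Set.Icc (0 : ℝ) T)), |u s| ≤ 1) :
    eNorm (∫ s in (0 : ℝ)..T, u s • C.mulVec ((mexp A (T - s)).mulVec B)) ≤
      eNorm (∫ s in (0 : ℝ)..T, C.mulVec ((mexp A s).mulVec B)) := by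
  set f : ℝ → Fin p → ℝ := fun s => C.mulVec ((mexp A (T - s)).mulVec B)
  have hf : Continuous fun s => WithLp.toLp 2 (f s) := by
    have := continuous_mexp A
    fun_prop
  have hrev : ∫ s in (0 : ℝ)..T, C.mulVec ((mexp A s).mulVec B) = ∫ s in (0 : ℝ)..T, f s := by
    have h := intervalIntegral.integral_comp_sub_left
      (fun s => C.mulVec ((mexp A s).mulVec B)) (a := 0) (b := T) T
    rw [sub_self, sub_zero] at h
    exact h.symm
  rw [hrev, intervalIntegral.integral_of_le hT.le, intervalIntegral.integral_of_le hT.le,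
    eNorm_eq_norm_toLp, eNorm_eq_norm_toLp, ← integral_toLp, ← integral_toLp]
  simp_rw [WithLp.toLp_smul]
  refine norm_integral_smul_le_of_inner_nonneg hf.integrableOn_Ioc hu_meas.aestronglyMeasurable
    (ae_restrict_of_ae_restrict_of_subset Set.Ioc_subset_Icc_self hu_bdd) ?_
  filter_upwards [ae_restrict_mem measurableSet_Ioc] with s hs
  filter_upwards [ae_restrict_mem measurableSet_Ioc] with t ht
  rw [EuclideanSpace.inner_toLp_toLp, star_trivial]
  exact hsign _ (sub_nonneg.mpr ht.2) _ (sub_nonneg.mpr hs.2)
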